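/- For 0 ≤ α ≤ 1, the Z-channel mechanism Z_α on X = Y = {0,1} with rows (2^α − 1, 2 − 2^α) and (0, 1) is α-maximal-leakage private, i.e., ∑_{y} max_x Z_α(x,y) ≤ 2^α, and satisfies ‖Z_α(P_0) − Z_α(P_1)‖_TV = (2^α − 1)·‖P_0 − P_1‖_TV for all distributions P_0, P_1 on {0,1}; hence η_TV(Z_α) = 2^α − 1, showing the bound η_TV ≤ 2^α − 1 for α-MaxL private mechanisms is tight. -/
import Mathlib


open Finset

/-- The `Z`-channel mechanism on `{0,1}`: rows `(2^α − 1, 2 − 2^α)` and `(0,1)`. -/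
noncomputable def Zc (α : ℝ) : Fin 2 → Fin 2 → ℝ := fun x y =>
  if x = 0 then (if y = 0 then (2:ℝ) ^ α - 1 else 2 - (2:ℝ) ^ α)
  else (if y = 0 then 0 else 1)

lemma iSup_fin2 (f : Fin 2 → ℝ) : (⨆ x : Fin 2, f x) = max (f 0) (f 1) := by
  apply le_antisymm
  · apply ciSup_le
    intro x
    fin_cases x
    · exact le_max_left _ _
    · exact le_max_right _ _
  · apply max_le
    · exact le_ciSup (Set.Finite.bddAbove (Set.finite_range f)) 0
    · exact le_ciSup (Set.Finite.bddAbove (Set.finite_range f)) 1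

/-- the `Z`-channel is α-MaxL private, contracts total variation
exactly by `2^α − 1`, and hence has Dobrushin coefficient `2^α − 1`, showing the
bound `η_TV ≤ 2^α − 1` for α-MaxL private mechanisms is tight. -/
theorem stmt13 (α : ℝ) (hα0 : 0 ≤ α) (hα1 : α ≤ 1) :
    (∑ y, (⨆ x : Fin 2, Zc α x y) ≤ (2:ℝ) ^ α) ∧
    (∀ P0 P1 : Fin 2 → ℝ,
      (∀ x, 0 ≤ P0 x) → ∑ x, P0 x = 1 → (∀ x, 0 ≤ P1 x) → ∑ x, P1 x = 1 →
        (1/2) * ∑ y, |(∑ x, P0 x * Zc α x y) - (∑ x, P1 x * Zc α x y)| =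
          ((2:ℝ) ^ α - 1) * ((1/2) * ∑ x, |P0 x - P1 x|)) ∧
    (⨆ x1 : Fin 2, ⨆ x2 : Fin 2, (1/2) * ∑ y, |Zc α x1 y - Zc α x2 y|) =
      (2:ℝ) ^ α - 1 := by
  have h1 : (1:ℝ) ≤ (2:ℝ) ^ α := by
    calc (1:ℝ) = (2:ℝ) ^ (0:ℝ) := by norm_num
    _ ≤ (2:ℝ) ^ α := Real.rpow_le_rpow_of_exponent_le (by norm_num) hα0
  have h2 : (2:ℝ) ^ α ≤ 2 := by
    calc (2:ℝ) ^ α ≤ (2:ℝ) ^ (1:ℝ) := Real.rpow_le_rpow_of_exponent_le (by norm_num) hα1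
    _ = 2 := by norm_num
  refine ⟨?_, ?_, ?_⟩
  · rw [Fin.sum_univ_two, iSup_fin2, iSup_fin2]
    simp only [Zc]
    norm_num
    rw [max_eq_left (by linarith), max_eq_right (by linarith)]
    linarith
  · intro P0 P1 h0 s0 h1' s1
    rw [Fin.sum_univ_two] at s0 s1
    simp only [Fin.sum_univ_two, Zc]
    norm_num
    have hd : P0 1 - P1 1 = -(P0 0 - P1 0) := by linarith
    have e1 : P0 0 * ((2:ℝ)^α - 1) - P1 0 * ((2:ℝ)^α - 1) = (P0 0 - P1 0) * ((2:ℝ)^α - 1) := by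
      ring
    have e2 : P0 0 * (2 - (2:ℝ)^α) + P0 1 - (P1 0 * (2 - (2:ℝ)^α) + P1 1) =
        -((P0 0 - P1 0) * ((2:ℝ)^α - 1)) := by linarith [hd]
    rw [e1, e2, abs_neg, hd, abs_neg, abs_mul, abs_of_nonneg (by linarith : (0:ℝ) ≤ (2:ℝ)^α - 1)]
    ring
  · rw [iSup_fin2]
    rw [show (⨆ x2 : Fin 2, (1/2) * ∑ y, |Zc α 0 y - Zc α x2 y|) =
        max ((1/2) * ∑ y, |Zc α 0 y - Zc α 0 y|) ((1/2) * ∑ y, |Zc α 0 y - Zc α 1 y|) from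
        iSup_fin2 _]
    rw [show (⨆ x2 : Fin 2, (1/2) * ∑ y, |Zc α 1 y - Zc α x2 y|) =
        max ((1/2) * ∑ y, |Zc α 1 y - Zc α 0 y|) ((1/2) * ∑ y, |Zc α 1 y - Zc α 1 y|) from
        iSup_fin2 _]
    simp only [Fin.sum_univ_two, Zc]
    norm_num
    have a1 : |(2:ℝ)^α - 1 - 0| = (2:ℝ)^α - 1 := by
      rw [sub_zero]; exact abs_of_nonneg (by linarith)
    have a2 : |2 - (2:ℝ)^α - 1| = (2:ℝ)^α - 1 := by
      rw [show (2 - (2:ℝ)^α - 1) = -((2:ℝ)^α - 1) by ring, abs_neg]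
      exact abs_of_nonneg (by linarith)
    have a3 : |(0:ℝ) - ((2:ℝ)^α - 1)| = (2:ℝ)^α - 1 := by
      rw [zero_sub, abs_neg]; exact abs_of_nonneg (by linarith)
    have a4 : |1 - (2 - (2:ℝ)^α)| = (2:ℝ)^α - 1 := by
      rw [show (1 - (2 - (2:ℝ)^α)) = (2:ℝ)^α - 1 by ring]
      exact abs_of_nonneg (by linarith)
    have a5 : |1 - (2:ℝ)^α| = (2:ℝ)^α - 1 := by
      rw [show (1 - (2:ℝ)^α) = -((2:ℝ)^α - 1) by ring, abs_neg]
      exact abs_of_nonneg (by linarith)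
    have a6 : |(2:ℝ)^α - 1| = (2:ℝ)^α - 1 := abs_of_nonneg (by linarith)
    simp only [a1, a2, a3, a4, a5, a6, sub_self, abs_zero]
    rw [show (1:ℝ)/2 * ((2:ℝ)^α - 1 + ((2:ℝ)^α - 1)) = (2:ℝ)^α - 1 by ring]
    rw [max_eq_right (by linarith : (0:ℝ) ≤ (2:ℝ)^α - 1),
        max_eq_left (by linarith : (0:ℝ) ≤ (2:ℝ)^α - 1),
        max_self]
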